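/- For every nonzero ordinal γ and nonzero finite m, the ordinal ω^γ·m + 1 is order-reinforcing: whenever X is a set of ordinals homeomorphic (as a subspace of ordinals) to ω^γ·m + 1, there is a subset Y ⊆ X order-homeomorphic to ω^γ·m + 1. -/

import Mathlib

open Set Ordinal
open scoped Cardinal

/-- Natural (Hessenberg) addition of ordinals, as formerly `Ordinal.nadd` in Mathlib. -/
noncomputable def Ordinal.nadd.{u} : Ordinal.{u} → Ordinal.{u} → Ordinal.{u}
  | a, b =>
    max (⨆ x : Iio a, Order.succ (Ordinal.nadd x.1 b)) (⨆ x : Iio b, Order.succ (Ordinal.nadd a x.1))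
termination_by a b => (a, b)
decreasing_by
  · exact Prod.Lex.left _ _ x.2
  · exact Prod.Lex.right _ x.2

infixl:65 " ♯ " => Ordinal.nadd

noncomputable section

/-- Derived set (non-isolated points) of a set of ordinals, as a subspace. -/
def deriv' (s : Set Ordinal.{0}) : Set Ordinal.{0} := {x ∈ s | x ∈ closure (s \ {x})}

/-- Iterated Cantor–Bendixson derivative. -/
def iterDeriv (s : Set Ordinal.{0}) (o : Ordinal.{0}) : Set Ordinal.{0} :=
  Ordinal.limitRecOn o s (fun _ ih => deriv' ih) (fun o _ ih => ⋂ (p : Ordinal.{0}) (h : p < o), ih p h)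

/-- `s` contains a homeomorphic copy of the ordinal `α` (with its order topology). -/
def HomeoCopy (α : Ordinal.{0}) (s : Set Ordinal.{0}) : Prop :=
  ∃ t : Set Ordinal, t ⊆ s ∧ Nonempty ((Iio α : Set Ordinal.{0}) ≃ₜ t)

/-- Two ordinals are biembeddable: each is homeomorphic to a subspace of the other. -/
def Biembed (α β : Ordinal.{0}) : Prop := HomeoCopy α (Iio β) ∧ HomeoCopy β (Iio α)

/-- Two sets of ordinals are order-homeomorphic: there is an order-preserving homeomorphism. -/
def OrderHomeo (X Y : Set Ordinal.{0}) : Prop :=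
  ∃ e : X ≃ₜ Y, ∀ a b : X, a ≤ b ↔ e a ≤ e b

/-- An ordinal is order-reinforcing. -/
def OrderReinforcing (α : Ordinal.{0}) : Prop :=
  ∀ X : Set Ordinal, Nonempty ((Iio α : Set Ordinal.{0}) ≃ₜ X) → ∃ Y ⊆ X, OrderHomeo (Iio α) Y

/-- The Cantor–Bendixson rank of an ordinal: the least exponent in its Cantor normal form. -/
def CB (x : Ordinal.{0}) : Ordinal := if x = 0 then 0 else sSup {γ | (ω : Ordinal.{0}) ^ γ ∣ x}

/-- The natural (Hessenberg) sum of a finite family of ordinals. -/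
def natSumFam {k : ℕ} (α : Fin k → Ordinal.{0}) : Ordinal := (List.ofFn α).foldr (· ♯ ·) 0

/-- The Milner–Rado sum of a finite family of ordinals. -/
def mrSumFam {k : ℕ} (α : Fin k → Ordinal.{0}) : Ordinal :=
  sInf {δ | ∀ β : Fin k → Ordinal, (∀ i, β i < α i) → δ ≠ natSumFam β}

/-- The topological pigeonhole relation `β → (top α i)¹` for finitely many colours. -/
def TopPH {k : ℕ} (β : Ordinal.{0}) (α : Fin k → Ordinal.{0}) : Prop :=
  ∀ c : Ordinal → Fin k, ∃ i, HomeoCopy (α i) (Iio β ∩ c ⁻¹' {i})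

/-- The topological pigeonhole relation with an arbitrary index type of colours. -/
def TopPHFam {ι : Type*} (β : Ordinal.{0}) (α : ι → Ordinal.{0}) : Prop :=
  ∀ c : Ordinal → ι, ∃ i, HomeoCopy (α i) (Iio β ∩ c ⁻¹' {i})

/-- `ω̄[γ, m]`: `ω ^ γ * m + 1` if `γ > 0`, and `m` if `γ = 0`. -/
def obar (γ : Ordinal.{0}) (m : ℕ) : Ordinal := if γ = 0 then (m : Ordinal.{0}) else ω ^ γ * m + 1

/-- `C` is closed and unbounded in `o`. -/
def IsClubIn (C : Set Ordinal.{0}) (o : Ordinal.{0}) : Prop :=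
  C ⊆ Iio o ∧ (∀ x < o, ∃ y ∈ C, x ≤ y) ∧
    ∀ x < o, x ≠ 0 → (∀ y < x, ∃ z ∈ C, y < z ∧ z < x) → x ∈ C

/-- `S` is stationary in `o`: it meets every club subset of `o`. -/
def StationaryIn (S : Set Ordinal.{0}) (o : Ordinal.{0}) : Prop :=
  ∀ C, IsClubIn C o → (S ∩ C).Nonempty

/-!
A compact set of ordinals is the image of a closed initial segment `[0, ρ]` under the
enumeration of a closed unbounded set, hence order-homeomorphic to `ρ + 1`. If
`ρ ≥ ω ^ γ * m`, the enumeration restricted to `[0, ω ^ γ * m]` is the required copy. Otherwise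
`[0, ω ^ γ * m]` would be homeomorphic to a set `s` of ordinals below `ω ^ γ * m`. But
homeomorphisms preserve the size of the `γ`-th Cantor–Bendixson derivative, which for
`[0, ω ^ γ * m]` is a finite set of multiples of `ω ^ γ` containing `ω ^ γ * m`, and for `s` is a
proper subset of it.
-/
open Filter Topology Order CantorBendixson

universe u

section DerivedSet

variable {X Y : Type*} [TopologicalSpace X] [TopologicalSpace Y]

theorem accPt_principal_iff_mem_closure {x : X} {A : Set X} :
    AccPt x (𝓟 A) ↔ x ∈ closure (A \ {x}) :=
  accPt_iff_frequently_nhdsNE.trans mem_closure_ne_iff_frequently_within.symm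

theorem Topology.IsEmbedding.accPt_principal_image_iff {f : X → Y} (hf : IsEmbedding f) {x : X}
    {A : Set X} : AccPt (f x) (𝓟 (f '' A)) ↔ AccPt x (𝓟 A) := by
  rw [accPt_principal_iff_mem_closure, accPt_principal_iff_mem_closure,
    hf.isInducing.closure_eq_preimage_closure_image (A \ {x}), image_sdiff hf.injective,
    image_singleton, mem_preimage]

theorem Topology.IsEmbedding.image_relDerivedSet {f : X → Y} (hf : IsEmbedding f) (A : Set X) :
    f '' relDerivedSet A = relDerivedSet (f '' A) := by
  ext y
  simp only [relDerivedSet_apply, mem_inter_iff, mem_derivedSet, mem_image]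
  constructor
  · rintro ⟨x, ⟨hacc, hx⟩, rfl⟩
    exact ⟨hf.accPt_principal_image_iff.2 hacc, x, hx, rfl⟩
  · rintro ⟨hacc, x, hx, rfl⟩
    exact ⟨x, ⟨hf.accPt_principal_image_iff.1 hacc, hx⟩, rfl⟩

end DerivedSet

theorem Topology.IsEmbedding.image_iteratedDerivedSet {X Y : Type u} [TopologicalSpace X]
    [TopologicalSpace Y] {f : X → Y} (hf : IsEmbedding f) (s : Set X) (a : Ordinal) :
    f '' sᵈ[a] = (f '' s)ᵈ[a] := by
  induction a using Ordinal.limitRecOn with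
  | zero => simp only [iteratedDerivedSet_zero]
  | add_one a ih =>
    rw [iteratedDerivedSet_succ, iteratedDerivedSet_succ, ← ih, hf.image_relDerivedSet]
  | limit a ha ih =>
    have : Nonempty (Iio a) := ⟨⟨0, ha.bot_lt⟩⟩
    rw [iteratedDerivedSet_limit ha, iteratedDerivedSet_limit ha,
      hf.injective.injOn.image_iInter_eq]
    exact iInter_congr fun b ↦ ih b b.2

theorem iterDeriv_zero (s : Set Ordinal.{0}) : iterDeriv s 0 = s :=
  limitRecOn_zero ..

theorem iterDeriv_add_one (s : Set Ordinal.{0}) (c : Ordinal.{0}) :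
    iterDeriv s (c + 1) = deriv' (iterDeriv s c) :=
  limitRecOn_add_one ..

theorem iterDeriv_limit (s : Set Ordinal.{0}) {c : Ordinal.{0}} (hc : IsSuccLimit c) :
    iterDeriv s c = ⋂ (p : Ordinal.{0}) (_ : p < c), iterDeriv s p :=
  limitRecOn_limit _ _ _ _ hc

theorem deriv'_eq_relDerivedSet (s : Set Ordinal.{0}) : deriv' s = relDerivedSet s := by
  ext x
  rw [deriv', relDerivedSet_apply, mem_sep_iff, mem_inter_iff, mem_derivedSet,
    accPt_principal_iff_mem_closure, and_comm]

/-- `iterDeriv` is indexed by `Ordinal.{0}`, while Mathlib's iteration on the space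
`Ordinal.{0} : Type 1` is indexed by `Ordinal.{1}`. -/
theorem iterDeriv_eq_iteratedDerivedSet (s : Set Ordinal.{0}) (c : Ordinal.{0}) :
    iterDeriv s c = sᵈ[Ordinal.lift.{1} c] := by
  induction c using Ordinal.limitRecOn with
  | zero => rw [iterDeriv_zero, lift_zero, iteratedDerivedSet_zero]
  | add_one c ih =>
    rw [iterDeriv_add_one, lift_add_one, iteratedDerivedSet_succ, ih, deriv'_eq_relDerivedSet]
  | limit c hc ih =>
    rw [iterDeriv_limit s hc, iteratedDerivedSet_limit (isSuccLimit_lift.2 hc)]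
    ext x
    simp only [mem_iInter, Subtype.forall, mem_Iio]
    refine ⟨fun h b hb ↦ ?_, fun h p hp ↦ ?_⟩
    · obtain ⟨p, rfl⟩ := mem_range_lift_of_le hb.le
      exact ih p (lift_lt.1 hb) ▸ h p (lift_lt.1 hb)
    · exact (ih p hp).symm ▸ h _ (lift_lt.2 hp)

theorem iterDeriv_subset (s : Set Ordinal.{0}) (c : Ordinal.{0}) : iterDeriv s c ⊆ s := by
  rw [iterDeriv_eq_iteratedDerivedSet]
  simpa using iteratedDerivedSet_antitone s ((zero_le : 0 ≤ Ordinal.lift.{1} c))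

theorem iterDeriv_mono {s t : Set Ordinal.{0}} (hst : s ⊆ t) (c : Ordinal.{0}) :
    iterDeriv s c ⊆ iterDeriv t c := by
  simpa only [iterDeriv_eq_iteratedDerivedSet] using iteratedDerivedSet_mono hst _

theorem iterDeriv_eq_image_val (s : Set Ordinal.{0}) (c : Ordinal.{0}) :
    iterDeriv s c = Subtype.val '' (univ : Set s)ᵈ[Ordinal.lift.{1} c] := by
  rw [iterDeriv_eq_iteratedDerivedSet, IsEmbedding.subtypeVal.image_iteratedDerivedSet, image_univ,
    Subtype.range_coe]

theorem Homeomorph.ncard_iterDeriv_eq {s t : Set Ordinal.{0}} (e : s ≃ₜ t) (c : Ordinal.{0}) :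
    (iterDeriv s c).ncard = (iterDeriv t c).ncard := by
  have he : (univ : Set t)ᵈ[Ordinal.lift.{1} c] = e '' (univ : Set s)ᵈ[Ordinal.lift.{1} c] := by
    rw [e.isEmbedding.image_iteratedDerivedSet, image_univ_of_surjective e.surjective]
  rw [iterDeriv_eq_image_val, iterDeriv_eq_image_val, he,
    ncard_image_of_injective _ Subtype.val_injective,
    ncard_image_of_injective _ Subtype.val_injective, ncard_image_of_injective _ e.injective]

theorem isSuccPrelimit_iff_forall_dvd_mem_Ioo {a : Ordinal} (ha : a ≠ 0) (q : Ordinal) :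
    IsSuccPrelimit q ↔ ∀ b < a * q, ({z | a ∣ z} ∩ Ioo b (a * q)).Nonempty := by
  have ha' : 0 < a := pos_iff_ne_zero.2 ha
  constructor
  · intro hq b hb
    refine ⟨a * (b / a + 1), dvd_mul_right _ _, ?_, ?_⟩
    · simpa only [mul_add_one] using lt_mul_div_add b ha
    · rw [mul_lt_mul_iff_right₀ ha', ← succ_eq_add_one]
      exact isSuccPrelimit_iff_succ_lt.1 hq _ ((lt_mul_iff_div_lt ha).1 hb)
  · refine fun h ↦ isSuccPrelimit_iff_succ_lt.2 fun r hr ↦ ?_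
    obtain ⟨_, ⟨k, rfl⟩, hrk, hkq⟩ := h (a * r) ((mul_lt_mul_iff_right₀ ha').2 hr)
    rw [mul_lt_mul_iff_right₀ ha'] at hrk hkq
    exact (succ_le_of_lt hrk).trans_lt hkq

theorem opow_dvd_of_isSuccLimit {a c x : Ordinal} (ha : a ≠ 0) (hc : IsSuccLimit c)
    (h : ∀ p < c, a ^ p ∣ x) : a ^ c ∣ x := by
  rw [dvd_iff_mod_eq_zero]
  obtain ⟨p, hpc, hp⟩ := (lt_opow_of_isSuccLimit ha hc).1 (mod_lt x (opow_ne_zero c ha))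
  have hdvd : a ^ p ∣ x % a ^ c := by
    refine (dvd_add_iff (dvd_mul_of_dvd_left (opow_dvd_opow a hpc.le) (x / a ^ c))).1 ?_
    rw [div_add_mod]
    exact h p hpc
  by_contra h0
  exact (le_of_dvd h0 hdvd).not_gt hp

theorem finite_setOf_dvd_le_mul_natCast (c : Ordinal) (n : ℕ) :
    {x | x ≤ ω ^ c * n ∧ ω ^ c ∣ x}.Finite := by
  refine ((finite_Iic n).image fun k : ℕ ↦ ω ^ c * k).subset ?_
  rintro _ ⟨hx, k, rfl⟩
  have hk : k ≤ n := (mul_le_mul_iff_right₀ (opow_pos c omega0_pos)).1 hx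
  obtain ⟨j, rfl⟩ := lt_omega0.1 (hk.trans_lt (natCast_lt_omega0 n))
  exact ⟨j, Nat.cast_le.1 hk, rfl⟩

theorem opow_dvd_of_mem_iterDeriv {s : Set Ordinal.{0}} {c x : Ordinal.{0}}
    (hx : x ∈ iterDeriv s c) : ω ^ c ∣ x := by
  induction c using Ordinal.limitRecOn generalizing x with
  | zero => simp
  | add_one c ih =>
    rw [iterDeriv_add_one, deriv'_eq_relDerivedSet] at hx
    obtain ⟨hacc, hx⟩ := hx
    obtain ⟨q, rfl⟩ := ih hx
    have hacc' : AccPt (ω ^ c * q) (𝓟 {z | ω ^ c ∣ z}) := hacc.mono (principal_mono.2 fun _ ↦ ih)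
    have hq : IsSuccPrelimit q := (isSuccPrelimit_iff_forall_dvd_mem_Ioo (opow_ne_zero c
      omega0_ne_zero) q).2 (SuccOrder.accPt_principal.1 hacc').2
    rw [opow_add_one]
    exact mul_dvd_mul_left _ (isSuccPrelimit_iff_omega0_dvd.1 hq)
  | limit c hc ih =>
    rw [iterDeriv_limit s hc, mem_iInter₂] at hx
    exact opow_dvd_of_isSuccLimit omega0_ne_zero hc fun p hp ↦ ih p hp (hx p hp)

theorem mem_iterDeriv_of_Iic_subset {s : Set Ordinal.{0}} {c x : Ordinal.{0}} (hx : x ≠ 0)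
    (hdvd : ω ^ c ∣ x) (hs : Iic x ⊆ s) : x ∈ iterDeriv s c := by
  induction c using Ordinal.limitRecOn generalizing x with
  | zero => rw [iterDeriv_zero]; exact hs (mem_Iic.2 le_rfl)
  | add_one c ih =>
    rw [iterDeriv_add_one, deriv'_eq_relDerivedSet]
    refine ⟨SuccOrder.accPt_principal.2 ⟨by simpa [isMin_iff_eq_bot] using hx, fun b hb ↦ ?_⟩,
      ih hx ((opow_dvd_opow ω le_self_add).trans hdvd) hs⟩
    obtain ⟨k, rfl⟩ := hdvd
    rw [opow_add_one, mul_assoc] at hb hs ⊢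
    obtain ⟨z, hz, hbz, hzx⟩ := (isSuccPrelimit_iff_forall_dvd_mem_Ioo (opow_ne_zero c
      omega0_ne_zero) _).1 (isSuccPrelimit_iff_omega0_dvd.2 (dvd_mul_right ω k)) b hb
    exact ⟨z, ih (zero_le.trans_lt hbz).ne' hz ((Iic_subset_Iic.2 hzx.le).trans hs), hbz, hzx⟩
  | limit c hc ih =>
    rw [iterDeriv_limit s hc, mem_iInter₂]
    exact fun p hp ↦ ih p hp hx ((opow_dvd_opow ω hp.le).trans hdvd) hs

theorem isEmpty_homeomorph_of_subset_Iio {γ m : Ordinal.{0}} (hm : m < ω)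
    {s : Set Ordinal.{0}} (hs : s ⊆ Iio (ω ^ γ * m)) :
    IsEmpty ((Iic (ω ^ γ * m) : Set Ordinal.{0}) ≃ₜ s) := by
  refine ⟨fun e ↦ ?_⟩
  have hpos : 0 < ω ^ γ * m := zero_le.trans_lt (hs (e ⟨0, mem_Iic.2 zero_le⟩).2)
  obtain ⟨n, rfl⟩ := lt_omega0.1 hm
  have hfin : (iterDeriv (Iic (ω ^ γ * n)) γ).Finite :=
    (finite_setOf_dvd_le_mul_natCast γ n).subset fun x hx ↦
      ⟨iterDeriv_subset _ γ hx, opow_dvd_of_mem_iterDeriv hx⟩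
  have htop : ω ^ γ * n ∈ iterDeriv (Iic (ω ^ γ * n)) γ :=
    mem_iterDeriv_of_Iic_subset hpos.ne' (dvd_mul_right _ _) subset_rfl
  have hlt : iterDeriv s γ ⊂ iterDeriv (Iic (ω ^ γ * n)) γ :=
    ssubset_of_subset_not_subset (iterDeriv_mono (hs.trans Iio_subset_Iic_self) γ)
      fun h ↦ (mem_Iio.1 (hs (iterDeriv_subset s γ (h htop)))).false
  exact (ncard_lt_ncard hlt hfin).ne (e.ncard_iterDeriv_eq γ).symm

theorem isCompact_Iic {α : Type*} [Preorder α] [OrderBot α] [TopologicalSpace α]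
    [CompactIccSpace α] (a : α) : IsCompact (Iic a) :=
  Icc_bot (a := a) ▸ isCompact_Icc

theorem IsCompact.exists_isNormal_image_Iic {X : Set Ordinal.{u}} (hX : IsCompact X)
    (hne : X.Nonempty) : ∃ f : Ordinal.{u} → Ordinal.{u}, IsNormal f ∧ ∃ ρ, X = f '' Iic ρ := by
  obtain ⟨b, hbX, hb⟩ := hX.exists_isGreatest hne
  set S := X ∪ Ici (b + 1)
  have hS : ¬ BddAbove S := fun h ↦ not_bddAbove_Ici _ (h.mono subset_union_right)
  have hSX : ∀ x ∈ S, x ≤ b → x ∈ X := by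
    rintro x (hx | hx) hxb
    · exact hx
    · exact absurd (hx.trans hxb) (lt_add_one b).not_ge
  have hf : IsNormal (enumOrd S) := isNormal_enumOrd (fun t ht htne htb ↦
    closure_minimal ht (hX.isClosed.union isClosed_Ici) (csSup_mem_closure htne htb)) hS
  obtain ⟨ρ, hρ⟩ := enumOrd_surjective hS (mem_union_left _ hbX)
  refine ⟨enumOrd S, hf, ρ, Subset.antisymm (fun x hx ↦ ?_) ?_⟩
  · obtain ⟨o, rfl⟩ := enumOrd_surjective hS (mem_union_left _ hx)
    exact ⟨o, (enumOrd_le_enumOrd hS).1 (hρ ▸ hb hx), rfl⟩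
  · rintro _ ⟨o, ho, rfl⟩
    exact hSX _ (enumOrd_mem hS o) (hρ ▸ (enumOrd_le_enumOrd hS).2 ho)

theorem orderHomeo_image_of_isCompact {f : Ordinal.{0} → Ordinal.{0}} (hf : IsNormal f)
    {K : Set Ordinal.{0}} (hK : IsCompact K) : OrderHomeo K (f '' K) := by
  have := isCompact_iff_compactSpace.1 hK
  have hc : Continuous (Equiv.Set.image f K hf.strictMono.injective) :=
    (hf.continuous.comp continuous_subtype_val).subtype_mk _
  exact ⟨hc.homeoOfEquivCompactToT2, fun a b ↦ hf.strictMono.le_iff_le.symm⟩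

theorem orderReinforcing_omega_pow_mul_succ_general (γ m : Ordinal.{0})
    (hmfin : m < ω) : OrderReinforcing (ω ^ γ * m + 1) := by
  rintro X ⟨e⟩
  rw [Iio_add_one_eq_Iic] at e ⊢
  have hK := isCompact_Iic (ω ^ γ * m)
  have hX : IsCompact X := by
    have := isCompact_iff_compactSpace.1 hK
    exact isCompact_iff_compactSpace.2 e.compactSpace
  obtain ⟨f, hf, ρ, rfl⟩ := hX.exists_isNormal_image_Iic ⟨_, (e ⟨0, mem_Iic.2 zero_le⟩).2⟩
  rcases lt_or_ge ρ (ω ^ γ * m) with hρ | hρ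
  · obtain ⟨e', -⟩ := orderHomeo_image_of_isCompact hf (isCompact_Iic ρ)
    exact ((isEmpty_homeomorph_of_subset_Iio hmfin (Iic_subset_Iio.2 hρ)).false
      (e.trans e'.symm)).elim
  · exact ⟨_, image_mono (Iic_subset_Iic.2 hρ), orderHomeo_image_of_isCompact hf hK⟩

/-- `ω^γ·m + 1` is order-reinforcing. -/
theorem orderReinforcing_omega_pow_mul_succ (γ m : Ordinal.{0}) (hγ : γ ≠ 0) (hm : m ≠ 0)
    (hmfin : m < ω) : OrderReinforcing (ω ^ γ * m + 1) :=
  orderReinforcing_omega_pow_mul_succ_general γ m hmfin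

end
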